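/- arXiv:1712.00249 — 2 statements merged into one kernel-verified Lean document; each statement's English description precedes it below -/
import Mathlib

section
/- In the antisymmetric model, the tadpole contraction of three antisymmetric projectors is proportional to the projector itself: ∑_{c1,...,c6} A_{a1a2a3,c1c2c3} A_{c3c4c5,c5c2c6} A_{c6c4c1,b1b2b3} = ((N-2)/6)·A_{a1a2a3,b1b2b3} (equivalently f_1^A = (N-2)/(2 N^{3/2}) after normalization by 3/N^{3/2}). -/
open Finset

/-- The antisymmetric projector on rank-3 tensors over `ℝ^N`, with six explicit indices. -/
noncomputable def antisymProj6 (N : ℕ) (a1 a2 a3 b1 b2 b3 : Fin N) : ℝ :=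
  (1 / 6) * ∑ σ : Equiv.Perm (Fin 3),
    ((Equiv.Perm.sign σ : ℤ) : ℝ) *
      ∏ i : Fin 3, if (![a1, a2, a3]) i = (![b1, b2, b3]) (σ i) then (1 : ℝ) else 0

/-! Contract the middle projector first: its partial trace over the paired index `c4` is
`(N - 2)/6 · (δ_{c2 c1} δ_{c3 c5} - δ_{c2 c5} δ_{c3 c1})`. The first Kronecker product forces a repeated index into the last
projector, which then vanishes by antisymmetry. The second one leaves `∑ A_{a,xyz} A_{zyx,b}`,
and this is `-A_{a,b}` since reversing three indices is an odd permutation and `A` is idempotent. -/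

open Equiv

theorem Fin.sum_univ_pi_succ {β M : Type*} [Fintype β] [AddCommMonoid M] {n : ℕ}
    (f : (Fin (n + 1) → β) → M) :
    ∑ c, f c = ∑ x, ∑ c : Fin n → β, f (Fin.cons x c) := by
  rw [← (Fin.consEquiv fun _ => β).sum_comp, Fintype.sum_prod_type]; rfl

def kronecker {α : Type*} [DecidableEq α] (x y : α) : ℝ := if x = y then 1 else 0

local notation "δ" => kronecker

section AntisymProj

variable {N : ℕ}

theorem antisymProj6_eq_kronecker (a1 a2 a3 b1 b2 b3 : Fin N) :
    antisymProj6 N a1 a2 a3 b1 b2 b3 = (1 / 6) *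
      (δ a1 b1 * δ a2 b2 * δ a3 b3 - δ a1 b2 * δ a2 b1 * δ a3 b3
       - δ a1 b3 * δ a2 b2 * δ a3 b1 - δ a1 b1 * δ a2 b3 * δ a3 b2
       + δ a1 b2 * δ a2 b3 * δ a3 b1 + δ a1 b3 * δ a2 b1 * δ a3 b2) := by
  rw [antisymProj6, show (univ : Finset (Perm (Fin 3))) =
    {1, swap 0 1, swap 0 2, swap 1 2, swap 0 1 * swap 1 2, swap 0 2 * swap 1 2} by decide]
  simp (disch := decide) only [sum_insert, sum_singleton]
  simp only [← kronecker.eq_1]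
  simp only [Fin.prod_univ_three, Perm.coe_one, Perm.coe_mul, Function.comp_apply, id_eq,
    swap_apply_def, Perm.sign_one, Perm.sign_swap', Perm.sign_mul, Fin.reduceEq, if_true, if_false,
    Matrix.cons_val_zero, Matrix.cons_val_one, Matrix.cons_val, Units.val_one, Units.val_neg,
    Int.cast_one, Int.cast_neg, neg_mul, one_mul, neg_neg]
  ring

theorem antisymProj6_reverse_left (a1 a2 a3 b1 b2 b3 : Fin N) :
    antisymProj6 N a3 a2 a1 b1 b2 b3 = -antisymProj6 N a1 a2 a3 b1 b2 b3 := by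
  simp only [antisymProj6_eq_kronecker]; ring

theorem antisymProj6_of_eq_left (a1 a3 b1 b2 b3 : Fin N) :
    antisymProj6 N a1 a1 a3 b1 b2 b3 = 0 := by
  rw [antisymProj6_eq_kronecker]; ring

theorem sum_antisymProj6_partialTrace (a1 a2 b2 b3 : Fin N) :
    ∑ x, antisymProj6 N a1 a2 x x b2 b3
      = ((N : ℝ) - 2) / 6 * (δ a1 b2 * δ a2 b3 - δ a1 b3 * δ a2 b2) := by
  simp only [antisymProj6_eq_kronecker, kronecker, mul_ite, mul_zero, mul_one]
  simp only [← mul_sum, sum_sub_distrib, sum_add_distrib, sum_ite_irrel, sum_ite_eq',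
    mem_univ, if_true, sum_const_zero, sum_const, card_univ, Fintype.card_fin, nsmul_eq_mul]
  split_ifs <;> ring

theorem sum_antisymProj6_mul_antisymProj6 (a1 a2 a3 b1 b2 b3 : Fin N) :
    ∑ x, ∑ y, ∑ z, antisymProj6 N a1 a2 a3 x y z * antisymProj6 N x y z b1 b2 b3
      = antisymProj6 N a1 a2 a3 b1 b2 b3 := by
  simp only [antisymProj6_eq_kronecker, kronecker, mul_sub, sub_mul, mul_add, add_mul, ite_mul,
    mul_ite, zero_mul, mul_zero, mul_one]
  simp only [sum_sub_distrib, sum_add_distrib, sum_ite_eq', mem_univ, if_true]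
  split_ifs <;> ring

theorem sum_antisymProj6_mul_reverse (a1 a2 a3 b1 b2 b3 : Fin N) :
    ∑ x, ∑ y, ∑ z, antisymProj6 N a1 a2 a3 x y z * antisymProj6 N z y x b1 b2 b3
      = -antisymProj6 N a1 a2 a3 b1 b2 b3 := by
  calc _ = ∑ x, ∑ y, ∑ z, -(antisymProj6 N a1 a2 a3 x y z * antisymProj6 N x y z b1 b2 b3) :=
        sum_congr rfl fun x _ => sum_congr rfl fun y _ => sum_congr rfl fun z _ => by
          rw [antisymProj6_reverse_left x y z, mul_neg]
    _ = _ := by simp only [sum_neg_distrib, sum_antisymProj6_mul_antisymProj6]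

end AntisymProj

/-- The tadpole contraction of three antisymmetric projectors is `((N-2)/6)` times the
projector itself. -/
theorem antisym_tadpole (N : ℕ) (a1 a2 a3 b1 b2 b3 : Fin N) :
    ∑ c : Fin 6 → Fin N,
        antisymProj6 N a1 a2 a3 (c 0) (c 1) (c 2)
          * antisymProj6 N (c 2) (c 3) (c 4) (c 4) (c 1) (c 5)
          * antisymProj6 N (c 5) (c 3) (c 0) b1 b2 b3
      = (((N : ℝ) - 2) / 6) * antisymProj6 N a1 a2 a3 b1 b2 b3 := by
  calc _ = ∑ x0, ∑ x1, ∑ x2, ∑ x3, ∑ x5, antisymProj6 N a1 a2 a3 x0 x1 x2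
          * (∑ x4, antisymProj6 N x2 x3 x4 x4 x1 x5) * antisymProj6 N x5 x3 x0 b1 b2 b3 := by
        simp only [Fin.sum_univ_pi_succ, Fintype.sum_unique, mul_sum, sum_mul]
        refine sum_congr rfl fun x0 _ => sum_congr rfl fun x1 _ => sum_congr rfl fun x2 _ =>
          sum_congr rfl fun x3 _ => sum_comm
    _ = ∑ x0, ∑ x1, ∑ x2, ∑ x3, ∑ x5, antisymProj6 N a1 a2 a3 x0 x1 x2
          * (((N : ℝ) - 2) / 6 * (δ x2 x1 * δ x3 x5 - δ x2 x5 * δ x3 x1))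
          * antisymProj6 N x5 x3 x0 b1 b2 b3 := by
        simp only [sum_antisymProj6_partialTrace]
    _ = -(((N : ℝ) - 2) / 6 * ∑ x0, ∑ x1, ∑ x2,
          antisymProj6 N a1 a2 a3 x0 x1 x2 * antisymProj6 N x2 x1 x0 b1 b2 b3) := by
        simp only [kronecker, mul_sub, sub_mul, mul_ite, ite_mul, mul_one, mul_zero, zero_mul]
        simp only [sum_sub_distrib, antisymProj6_of_eq_left, mul_zero, ite_self, sum_const_zero,
          sum_ite_irrel, sum_ite_eq, sum_ite_eq', mem_univ, if_true, zero_sub, sum_neg_distrib]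
        simp only [← sum_mul, mul_right_comm _ (((N : ℝ) - 2) / 6), mul_comm (((N : ℝ) - 2) / 6)]
    _ = ((N : ℝ) - 2) / 6 * antisymProj6 N a1 a2 a3 b1 b2 b3 := by
        rw [sum_antisymProj6_mul_reverse]; ring
end

section
/- In graph H_1 (four vertices, S = 21 − ℓ): if ℓ ≥ 7 and F_2 ≤ 2 and F_1 = 0, then F ≤ ⌊(S + F_2)/3⌋ ≤ 5; hence a contraction deleting 4 vertices and at most 5 faces changes the degree by ω' ≤ ω − 4·(3/2) + 5 = ω − 1. -/
/-- Face bounds for the graph `H₁` (4 vertices, `S = 21 − ℓ`): if `ℓ ≥ 7`, `F₂ ≤ 2` and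
`F₁ = 0` then `F ≤ ⌊(S + F₂)/3⌋ ≤ 5`; hence a contraction deleting 4 vertices and at most
`F ≤ 5` faces changes the degree by `ω' = ω − 4·(3/2) + F ≤ ω − 1`. -/
theorem H1_face_bounds (ℓ : ℕ) (Fq : ℕ →₀ ℕ) (F : ℕ)
    (h0 : Fq 0 = 0) (h1 : Fq 1 = 0)
    (hS : Fq.sum (fun i n => i * n) = 21 - ℓ)
    (hF : F = Fq.sum (fun _ n => n))
    (hl : 7 ≤ ℓ) (hl' : ℓ ≤ 21) (hF2 : Fq 2 ≤ 2) :
    F ≤ (21 - ℓ + Fq 2) / 3 ∧ (21 - ℓ + Fq 2) / 3 ≤ 5 ∧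
    ∀ ω : ℚ, ω - 4 * (3 / 2) + (F : ℚ) ≤ ω - 1 := by
  have key : 3 * F ≤ 21 - ℓ + Fq 2 := by
    rw [hF, ← hS]
    calc 3 * Fq.sum (fun _ n => n) = ∑ i ∈ Fq.support, 3 * Fq i := by
            rw [Finsupp.sum, Finset.mul_sum]
      _ ≤ ∑ i ∈ Fq.support, (i * Fq i + if i = 2 then Fq i else 0) := by
            apply Finset.sum_le_sum
            intro i hi
            have hi0 : Fq i ≠ 0 := Finsupp.mem_support_iff.mp hi
            have hi2 : 2 ≤ i := by
              by_contra h
              interval_cases i <;> simp_all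
            rcases eq_or_lt_of_le hi2 with h | h
            · subst h; simp; omega
            · have : 3 * Fq i ≤ i * Fq i := Nat.mul_le_mul_right _ h
              simp [Nat.ne_of_gt h]
              omega
      _ = Fq.sum (fun i n => i * n) + (if 2 ∈ Fq.support then Fq 2 else 0) := by
            rw [Finset.sum_add_distrib, Finsupp.sum, Finset.sum_ite_eq' Fq.support 2 (fun i => Fq i)]
      _ ≤ Fq.sum (fun i n => i * n) + Fq 2 := by split <;> omega
  have hle5 : F ≤ 5 := by omega
  refine ⟨by omega, by omega, fun ω => ?_⟩
  have : (F : ℚ) ≤ 5 := by exact_mod_cast hle5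
  linarith
end
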